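/- For positive integers n₁, ..., n_k with n₁ + ... + n_k + 1 = n and the piecewise uniform measure P with density (3/2)^j on J_j = [1 - 1/3^(j-1), 1 - 2/3^j], the distortion of the set α = ∪_{j=1}^k {J_j(0) + ((2i-1)/(2n_j))·3^(-j) : 1 ≤ i ≤ n_j} ∪ {1 - 1/(2·3^k)} equals ∑_{j=1}^k (1/n_j²)·(1/12)·18^(-j) + (25/204)·18^(-k). -/

import Mathlib

open MeasureTheory Set

/-- The interval `J n = [1 - 1/3^(n-1), 1 - 2/3^n]`. -/
noncomputable def J (n : ℕ) : Set ℝ := Set.Icc (1 - 1 / 3 ^ (n - 1)) (1 - 2 / 3 ^ n)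

/-- The piecewise constant density: `(3/2)^n` on `J n` for `n ≥ 1`, `0` elsewhere. -/
noncomputable def f (x : ℝ) : ℝ :=
  ∑' n : ℕ, Set.indicator (J (n + 1)) (fun _ => ((3 : ℝ) / 2) ^ (n + 1)) x

/-- The piecewise uniform probability measure on `ℝ` with density `f`. -/
noncomputable def P : Measure ℝ :=
  MeasureTheory.volume.withDensity (fun x => ENNReal.ofReal (f x))

/-!
On `J j` with `j ≤ k` the `n_j` points of `α` are the midpoints of a partition of `J j` into
`n_j` cells of width `w = 3^(-j) / n_j`, and every other point of `α` lies at least `w` away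
from each of them, so on each cell the nearest point is its midpoint and the cell contributes
`w³ / 12`. The tail `⋃_{j > k} J j` lies within `3^(-k) / 2` of `1 - 1/(2·3^k)`, while all other
points of `α` are at least `3^(-k)` away from it. Weighted by the density `(3/2)^j`, the block
`J j` with `j ≤ k` contributes `1 / (12 n_j² 18^j)`, and the tail contributions are sums of three
geometric series adding up to `25/204 · 18^(-k)`.
-/

open Function

noncomputable def minSqDist (S : Set ℝ) (x : ℝ) : ℝ :=
  sInf ((fun a => (x - a) ^ 2) '' S)

theorem minSqDist_nonneg (S : Set ℝ) (x : ℝ) : 0 ≤ minSqDist S x :=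
  Real.sInf_nonneg <| by rintro _ ⟨a, -, rfl⟩; positivity

theorem continuous_minSqDist {S : Finset ℝ} (hS : S.Nonempty) : Continuous (minSqDist S) := by
  have h : minSqDist S = fun x => S.inf' hS fun a => (x - a) ^ 2 := by
    ext x
    rw [minSqDist, ← Finset.inf'_eq_csInf_image]
  rw [h, continuous_iff_continuousAt]
  exact fun x => ContinuousAt.finset_inf'_apply hS fun a _ => by fun_prop

theorem minSqDist_eq_of_separated {S : Set ℝ} {p w x : ℝ} (hp : p ∈ S)
    (hsep : ∀ b ∈ S, b ≠ p → w ≤ |b - p|) (hx : |x - p| ≤ w / 2) :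
    minSqDist S x = (x - p) ^ 2 := by
  refine IsLeast.csInf_eq ⟨⟨p, hp, rfl⟩, ?_⟩
  rintro _ ⟨b, hb, rfl⟩
  rcases eq_or_ne b p with rfl | hbp
  · exact le_rfl
  · have := abs_sub_le b x p
    rw [abs_sub_comm b x] at this
    exact sq_le_sq.2 (by linarith [hsep b hb hbp])

theorem integral_sq_sub (a b p : ℝ) :
    ∫ x in a..b, (x - p) ^ 2 = ((b - p) ^ 3 - (a - p) ^ 3) / 3 := by
  rw [intervalIntegral.integral_comp_sub_right (fun y => y ^ 2), integral_pow]
  ring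

theorem integral_eq_of_eqOn_sq_sub_midpoint {g : ℝ → ℝ} {a w : ℝ} (hw : 0 ≤ w) {N : ℕ}
    (hg : ∀ i < N, EqOn g (fun x => (x - (a + (i + 1 / 2) * w)) ^ 2)
      (Icc (a + i * w) (a + (i + 1) * w))) :
    ∫ x in a..a + N * w, g x = N * w ^ 3 / 12 := by
  set φ : ℕ → ℝ := fun i => a + i * w with hφ
  have hcell : ∀ i < N,
      EqOn g (fun x => (x - (a + (i + 1 / 2) * w)) ^ 2) (uIcc (φ i) (φ (i + 1))) := by
    intro i hi
    rw [uIcc_of_le (by simp only [hφ]; push_cast; nlinarith)]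
    simpa [hφ] using hg i hi
  have hint : ∀ i < N, IntervalIntegrable g volume (φ i) (φ (i + 1)) := fun i hi =>
    (Continuous.intervalIntegrable (by fun_prop) _ _).congr
      ((hcell i hi).symm.mono uIoc_subset_uIcc)
  calc ∫ x in a..a + N * w, g x = ∑ i ∈ Finset.range N, ∫ x in φ i..φ (i + 1), g x := by
        rw [intervalIntegral.sum_integral_adjacent_intervals hint]
        simp [hφ]
    _ = ∑ i ∈ Finset.range N, w ^ 3 / 12 := by
        refine Finset.sum_congr rfl fun i hi => ?_
        rw [intervalIntegral.integral_congr (hcell i (Finset.mem_range.1 hi)), integral_sq_sub]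
        simp only [hφ]
        push_cast
        ring
    _ = N * w ^ 3 / 12 := by simp; ring

theorem ofReal_tsum_indicator_of_pairwise_disjoint {α ι : Type*} {s : ι → Set α}
    (hs : Pairwise (Disjoint on s)) (c : ι → ℝ) (x : α) :
    ENNReal.ofReal (∑' i, (s i).indicator (fun _ => c i) x) =
      ∑' i, (s i).indicator (fun _ => ENNReal.ofReal (c i)) x := by
  by_cases hx : ∃ i, x ∈ s i
  · obtain ⟨i, hi⟩ := hx
    have hout : ∀ b, b ≠ i → x ∉ s b := fun b hb hxb => Set.disjoint_left.1 (hs hb) hxb hi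
    rw [tsum_eq_single i fun b hb => indicator_of_notMem (hout b hb) _,
      tsum_eq_single i fun b hb => indicator_of_notMem (hout b hb) _,
      indicator_of_mem hi, indicator_of_mem hi]
  · rw [not_exists] at hx
    simp [indicator_of_notMem (hx _)]

theorem le_sub_of_mem_J_of_lt {j j' : ℕ} (hjj' : j < j') {x y : ℝ} (hx : x ∈ J j)
    (hy : y ∈ J j') : 1 / 3 ^ j ≤ y - x := by
  have h : (1 : ℝ) / 3 ^ (j' - 1) ≤ 1 / 3 ^ j :=
    one_div_pow_le_one_div_pow_of_le (by norm_num) (by omega)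
  have h2 : (2 : ℝ) / 3 ^ j = 2 * (1 / 3 ^ j) := by ring
  linarith [hx.2, hy.1]

theorem measurableSet_J (j : ℕ) : MeasurableSet (J j) := measurableSet_Icc

theorem pairwise_disjoint_J_succ : Pairwise (Disjoint on fun m : ℕ => J (m + 1)) := by
  refine (pairwise_disjoint_on _).2 fun m m' hm => Set.disjoint_left.2 fun x hx hx' => ?_
  have := le_sub_of_mem_J_of_lt (Nat.succ_lt_succ hm) hx hx'
  rw [sub_self] at this
  exact (one_div_pos.2 (by positivity)).not_ge this

theorem P_eq_sum :
    P = Measure.sum fun m : ℕ =>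
      ENNReal.ofReal ((3 / 2) ^ (m + 1)) • volume.restrict (J (m + 1)) := by
  have hdens : (fun x => ENNReal.ofReal (f x)) =
      ∑' m : ℕ, (J (m + 1)).indicator fun _ => ENNReal.ofReal ((3 / 2) ^ (m + 1)) := by
    ext x
    rw [ENNReal.tsum_apply, f, ofReal_tsum_indicator_of_pairwise_disjoint pairwise_disjoint_J_succ]
  rw [P, hdens, withDensity_tsum fun m => measurable_const.indicator (measurableSet_J _)]
  congr 1
  ext1 m
  rw [withDensity_indicator (measurableSet_J _), withDensity_const]

theorem integral_P_of_hasSum {h : ℝ → ℝ} (hc : Continuous h) (h0 : ∀ x, 0 ≤ h x) {a : ℝ}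
    (hs : HasSum (fun m : ℕ => (3 / 2 : ℝ) ^ (m + 1) * ∫ x in J (m + 1), h x) a) :
    ∫ x, h x ∂P = a := by
  have hterm : ∀ m : ℕ, 0 ≤ (3 / 2 : ℝ) ^ (m + 1) * ∫ x in J (m + 1), h x := fun m =>
    mul_nonneg (by positivity) (setIntegral_nonneg measurableSet_Icc fun x _ => h0 x)
  have hpiece : ∀ m : ℕ, ∫⁻ x, ENNReal.ofReal (h x)
      ∂(ENNReal.ofReal ((3 / 2) ^ (m + 1)) • volume.restrict (J (m + 1))) =
        ENNReal.ofReal ((3 / 2 : ℝ) ^ (m + 1) * ∫ x in J (m + 1), h x) := by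
    intro m
    have hint : IntegrableOn h (J (m + 1)) := hc.integrableOn_Icc
    rw [lintegral_smul_measure, smul_eq_mul, ENNReal.ofReal_mul (by positivity),
      ofReal_integral_eq_lintegral_ofReal hint (ae_of_all _ fun x => h0 x)]
  rw [integral_eq_lintegral_of_nonneg_ae (ae_of_all _ h0) hc.aestronglyMeasurable, P_eq_sum,
    lintegral_sum_measure, tsum_congr hpiece, ← ENNReal.ofReal_tsum_of_nonneg hterm hs.summable,
    ENNReal.toReal_ofReal (tsum_nonneg hterm), hs.tsum_eq]

theorem one_div_three_pow_pred {j : ℕ} (hj : 1 ≤ j) :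
    (1 : ℝ) / 3 ^ (j - 1) = 3 * (1 / 3 ^ j) := by
  obtain ⟨m, rfl⟩ := Nat.exists_eq_add_of_le' hj
  rw [Nat.add_sub_cancel, pow_succ]
  field_simp

theorem setIntegral_J_eq_intervalIntegral (g : ℝ → ℝ) {j : ℕ} (hj : 1 ≤ j) :
    ∫ x in J j, g x = ∫ x in (1 - 1 / 3 ^ (j - 1))..(1 - 2 / 3 ^ j), g x := by
  have hs : (0 : ℝ) ≤ 1 / 3 ^ j := by positivity
  rw [J, integral_Icc_eq_integral_Ioc, intervalIntegral.integral_of_le]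
  rw [one_div_three_pow_pred hj, show (2 : ℝ) / 3 ^ j = 2 * (1 / 3 ^ j) by ring]
  linarith

section Codebook

variable (nj : ℕ → ℕ)

noncomputable def cellWidth (j : ℕ) : ℝ := 1 / 3 ^ j / nj j

noncomputable def codePoint (j i : ℕ) : ℝ :=
  (1 - 1 / 3 ^ (j - 1)) + (2 * (i : ℝ) - 1) / (2 * nj j) * (1 / 3 ^ j)

noncomputable def tailPoint (k : ℕ) : ℝ := 1 - 1 / (2 * 3 ^ k)

noncomputable def codebook (k : ℕ) : Finset ℝ :=
  ((Finset.Icc 1 k).biUnion fun j => (Finset.Icc 1 (nj j)).image (codePoint nj j)) ∪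
    {tailPoint k}

theorem coe_codebook (k : ℕ) :
    (codebook nj k : Set ℝ) =
      (⋃ j ∈ Finset.Icc 1 k,
          {y : ℝ | ∃ i ∈ Finset.Icc 1 (nj j),
            y = (1 - 1 / 3 ^ (j - 1)) + (2 * (i : ℝ) - 1) / (2 * nj j) * (1 / 3 ^ j)}) ∪
        {1 - 1 / (2 * 3 ^ k)} := by
  ext y
  simp [codebook, codePoint, tailPoint, eq_comm]

theorem mem_codebook {k : ℕ} {b : ℝ} :
    b ∈ codebook nj k ↔
      (∃ j ∈ Finset.Icc 1 k, ∃ i ∈ Finset.Icc 1 (nj j), codePoint nj j i = b) ∨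
        b = tailPoint k := by
  simp [codebook, or_comm]

theorem codebook_nonempty (k : ℕ) : (codebook nj k).Nonempty :=
  ⟨tailPoint k, (mem_codebook nj).2 (Or.inr rfl)⟩

variable {nj} {j : ℕ}

theorem cellWidth_pos (hn : 0 < nj j) : 0 < cellWidth nj j := by
  unfold cellWidth
  positivity

theorem cellWidth_le (hn : 0 < nj j) : cellWidth nj j ≤ 1 / 3 ^ j :=
  div_le_self (by positivity) (by exact_mod_cast hn)

theorem natCast_mul_cellWidth (hn : 0 < nj j) : (nj j : ℝ) * cellWidth nj j = 1 / 3 ^ j := by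
  unfold cellWidth
  field_simp

theorem codePoint_eq (hn : 0 < nj j) (i : ℕ) :
    codePoint nj j i = (1 - 1 / 3 ^ (j - 1)) + (i - 1 / 2) * cellWidth nj j := by
  have : (nj j : ℝ) ≠ 0 := by exact_mod_cast hn.ne'
  unfold codePoint cellWidth
  field_simp

theorem codePoint_mem_J (hj : 1 ≤ j) (hn : 0 < nj j) {i : ℕ} (hi : i ∈ Finset.Icc 1 (nj j)) :
    codePoint nj j i ∈ J j := by
  obtain ⟨hi1, hin⟩ := Finset.mem_Icc.1 hi
  have hi1' : (1 : ℝ) ≤ i := by exact_mod_cast hi1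
  have hin' : (i : ℝ) ≤ nj j := by exact_mod_cast hin
  have hw := cellWidth_pos hn
  have hnw := natCast_mul_cellWidth hn
  rw [codePoint_eq hn]
  constructor
  · nlinarith
  · rw [one_div_three_pow_pred hj, show (2 : ℝ) / 3 ^ j = 2 * (1 / 3 ^ j) by ring]
    nlinarith

theorem le_tailPoint_sub {k : ℕ} (hjk : j ≤ k) {x : ℝ} (hx : x ∈ J j) :
    1 / 3 ^ j ≤ tailPoint k - x := by
  have h : (1 : ℝ) / 3 ^ k ≤ 1 / 3 ^ j := one_div_pow_le_one_div_pow_of_le (by norm_num) hjk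
  have h0 : (0 : ℝ) ≤ 1 / 3 ^ k := by positivity
  have e1 : (2 : ℝ) / 3 ^ j = 2 * (1 / 3 ^ j) := by ring
  have e2 : (1 : ℝ) / (2 * 3 ^ k) = (1 / 3 ^ k) / 2 := by ring
  rw [tailPoint]
  linarith [hx.2]

theorem abs_sub_tailPoint_le {k : ℕ} (hkj : k < j) {x : ℝ} (hx : x ∈ J j) :
    |x - tailPoint k| ≤ 1 / 3 ^ k / 2 := by
  have h : (1 : ℝ) / 3 ^ (j - 1) ≤ 1 / 3 ^ k :=
    one_div_pow_le_one_div_pow_of_le (by norm_num) (by omega)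
  have h0 : (0 : ℝ) ≤ 2 / 3 ^ j := by positivity
  have e : (1 : ℝ) / (2 * 3 ^ k) = (1 / 3 ^ k) / 2 := by ring
  rw [tailPoint, abs_le]
  constructor <;> linarith [hx.1, hx.2]

end Codebook

section Distortion

variable {nj : ℕ → ℕ} {k : ℕ}

theorem cellWidth_le_abs_sub_codePoint (hpos : ∀ j ∈ Finset.Icc 1 k, 0 < nj j) {j i : ℕ}
    (hj : j ∈ Finset.Icc 1 k) (hi : i ∈ Finset.Icc 1 (nj j)) (b : ℝ)
    (hb : b ∈ codebook nj k) (hbp : b ≠ codePoint nj j i) :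
    cellWidth nj j ≤ |b - codePoint nj j i| := by
  have hj1 := (Finset.mem_Icc.1 hj).1
  have hw := cellWidth_le (hpos j hj)
  have hp := codePoint_mem_J hj1 (hpos j hj) hi
  rcases (mem_codebook nj).1 hb with ⟨j', hj', i', hi', rfl⟩ | rfl
  · have hq := codePoint_mem_J (Finset.mem_Icc.1 hj').1 (hpos j' hj') hi'
    rcases lt_trichotomy j' j with hlt | rfl | hgt
    · have hgap := le_sub_of_mem_J_of_lt hlt hq hp
      have h : (1 : ℝ) / 3 ^ j ≤ 1 / 3 ^ j' :=
        one_div_pow_le_one_div_pow_of_le (by norm_num) hlt.le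
      rw [abs_sub_comm]
      exact le_trans (by linarith) (le_abs_self _)
    · have hii : i' ≠ i := fun h => hbp (h ▸ rfl)
      rw [codePoint_eq (hpos j' hj), codePoint_eq (hpos j' hj), abs_sub_comm]
      have hw0 := cellWidth_pos (hpos j' hj)
      rcases Nat.lt_or_gt_of_ne hii with h | h
      · have h' : (i' : ℝ) + 1 ≤ i := by exact_mod_cast h
        exact le_trans (by nlinarith) (le_abs_self _)
      · have h' : (i : ℝ) + 1 ≤ i' := by exact_mod_cast h
        exact le_trans (by nlinarith) (neg_le_abs _)
    · exact le_trans (hw.trans (le_sub_of_mem_J_of_lt hgt hp hq)) (le_abs_self _)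
  · exact le_trans (hw.trans (le_tailPoint_sub (Finset.mem_Icc.1 hj).2 hp)) (le_abs_self _)

theorem le_abs_sub_tailPoint (hpos : ∀ j ∈ Finset.Icc 1 k, 0 < nj j) (b : ℝ)
    (hb : b ∈ codebook nj k) (hbp : b ≠ tailPoint k) :
    1 / 3 ^ k ≤ |b - tailPoint k| := by
  rcases (mem_codebook nj).1 hb with ⟨j, hj, i, hi, rfl⟩ | rfl
  · obtain ⟨hj1, hjk⟩ := Finset.mem_Icc.1 hj
    have h : (1 : ℝ) / 3 ^ k ≤ 1 / 3 ^ j := one_div_pow_le_one_div_pow_of_le (by norm_num) hjk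
    rw [abs_sub_comm]
    exact le_trans (h.trans (le_tailPoint_sub hjk (codePoint_mem_J hj1 (hpos j hj) hi)))
      (le_abs_self _)
  · exact absurd rfl hbp

theorem minSqDist_codebook_eqOn_cell (hpos : ∀ j ∈ Finset.Icc 1 k, 0 < nj j) {j i : ℕ}
    (hj : j ∈ Finset.Icc 1 k) (hi : i < nj j) :
    EqOn (minSqDist (codebook nj k))
      (fun x => (x - ((1 - 1 / 3 ^ (j - 1)) + (i + 1 / 2) * cellWidth nj j)) ^ 2)
      (Icc ((1 - 1 / 3 ^ (j - 1)) + i * cellWidth nj j)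
        ((1 - 1 / 3 ^ (j - 1)) + (i + 1) * cellWidth nj j)) := by
  intro x hx
  have hi' : i + 1 ∈ Finset.Icc 1 (nj j) := Finset.mem_Icc.2 ⟨by omega, hi⟩
  have hp : codePoint nj j (i + 1) = (1 - 1 / 3 ^ (j - 1)) + (i + 1 / 2) * cellWidth nj j := by
    rw [codePoint_eq (hpos j hj)]
    push_cast
    ring
  rw [← hp]
  refine minSqDist_eq_of_separated ?_ (cellWidth_le_abs_sub_codePoint hpos hj hi') ?_
  · exact (mem_codebook nj).2 (Or.inl ⟨j, hj, i + 1, hi', rfl⟩)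
  · rw [hp, abs_le]
    constructor <;> linarith [hx.1, hx.2]

theorem minSqDist_codebook_eqOn_J_of_lt (hpos : ∀ j ∈ Finset.Icc 1 k, 0 < nj j) {j : ℕ}
    (hkj : k < j) :
    EqOn (minSqDist (codebook nj k)) (fun x => (x - tailPoint k) ^ 2) (J j) := fun _ hx =>
  minSqDist_eq_of_separated ((mem_codebook nj).2 (Or.inr rfl))
    (le_abs_sub_tailPoint hpos) (abs_sub_tailPoint_le hkj hx)

theorem pow_mul_integral_J_minSqDist_codebook_of_mem (hpos : ∀ j ∈ Finset.Icc 1 k, 0 < nj j)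
    {j : ℕ} (hj : j ∈ Finset.Icc 1 k) :
    (3 / 2 : ℝ) ^ j * ∫ x in J j, minSqDist (codebook nj k) x =
      1 / (nj j : ℝ) ^ 2 * (1 / 12) * (1 / 18 ^ j) := by
  have hn := hpos j hj
  have hn' : (nj j : ℝ) ≠ 0 := by exact_mod_cast hn.ne'
  have hright : (1 : ℝ) - 2 / 3 ^ j = (1 - 1 / 3 ^ (j - 1)) + nj j * cellWidth nj j := by
    rw [natCast_mul_cellWidth hn, one_div_three_pow_pred (Finset.mem_Icc.1 hj).1]
    ring
  rw [setIntegral_J_eq_intervalIntegral _ (Finset.mem_Icc.1 hj).1, hright,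
    integral_eq_of_eqOn_sq_sub_midpoint (cellWidth_pos hn).le
      fun i hi => minSqDist_codebook_eqOn_cell hpos hj hi,
    cellWidth, div_pow,
    show (18 : ℝ) ^ j = 2 ^ j * 3 ^ j * 3 ^ j by rw [← mul_pow, ← mul_pow]; norm_num]
  field_simp

/- With `t = 3^(-m)`, the difference of cubes is `27^(-k) (t/4 - 5t²/6 + 19t³/27)`. -/
theorem pow_mul_integral_J_minSqDist_codebook_of_lt (hpos : ∀ j ∈ Finset.Icc 1 k, 0 < nj j)
    (m : ℕ) :
    (3 / 2 : ℝ) ^ (m + k + 1) * ∫ x in J (m + k + 1), minSqDist (codebook nj k) x =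
      (1 / 8 * (1 / 2) ^ m - 5 / 12 * (1 / 6) ^ m + 19 / 54 * (1 / 18) ^ m) * (1 / 18 ^ k) := by
  rw [setIntegral_congr_fun (measurableSet_J _) (minSqDist_codebook_eqOn_J_of_lt hpos (by omega)),
    setIntegral_J_eq_intervalIntegral _ (by omega), integral_sq_sub, tailPoint,
    Nat.add_sub_cancel]
  simp only [pow_succ, pow_add, div_pow, one_pow, show (6 : ℝ) = 2 * 3 by norm_num,
    show (18 : ℝ) = 2 * 3 * 3 by norm_num, mul_pow]
  field_simp
  ring

end Distortion

theorem hasSum_tail_coeff :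
    HasSum (fun m : ℕ =>
      1 / 8 * (1 / 2 : ℝ) ^ m - 5 / 12 * (1 / 6) ^ m + 19 / 54 * (1 / 18) ^ m) (25 / 204) := by
  have h2 := hasSum_geometric_of_lt_one (r := (1 / 2 : ℝ)) (by norm_num) (by norm_num)
  have h6 := hasSum_geometric_of_lt_one (r := (1 / 6 : ℝ)) (by norm_num) (by norm_num)
  have h18 := hasSum_geometric_of_lt_one (r := (1 / 18 : ℝ)) (by norm_num) (by norm_num)
  have hsum :
      1 / 8 * (1 - 1 / 2 : ℝ)⁻¹ - 5 / 12 * (1 - 1 / 6)⁻¹ + 19 / 54 * (1 - 1 / 18)⁻¹ = 25 / 204 := by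
    norm_num
  rw [← hsum]
  exact ((h2.mul_left (1 / 8)).sub (h6.mul_left (5 / 12))).add (h18.mul_left (19 / 54))

theorem stmt_9_general (k : ℕ) (nj : ℕ → ℕ) (hpos : ∀ j ∈ Finset.Icc 1 k, 0 < nj j) :
    (∫ x, sInf ((fun a => (x - a) ^ 2) ''
        ((⋃ j ∈ Finset.Icc 1 k,
            {y : ℝ | ∃ i ∈ Finset.Icc 1 (nj j),
              y = (1 - 1 / 3 ^ (j - 1)) + (2 * (i : ℝ) - 1) / (2 * nj j) * (1 / 3 ^ j)}) ∪
          {1 - 1 / (2 * 3 ^ k)})) ∂P) =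
      (∑ j ∈ Finset.Icc 1 k, (1 / (nj j : ℝ) ^ 2) * (1 / 12) * (1 / 18 ^ j)) +
        (25 / 204) * (1 / 18 ^ k) := by
  rw [← coe_codebook]
  refine integral_P_of_hasSum (continuous_minSqDist (codebook_nonempty nj k))
    (minSqDist_nonneg _) ?_
  have hhead : ∑ m ∈ Finset.range k, (3 / 2 : ℝ) ^ (m + 1) *
      ∫ x in J (m + 1), minSqDist (codebook nj k) x =
        ∑ j ∈ Finset.Icc 1 k, (1 / (nj j : ℝ) ^ 2) * (1 / 12) * (1 / 18 ^ j) := by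
    rw [Finset.range_eq_Ico, Finset.sum_Ico_add' (fun j => (3 / 2 : ℝ) ^ j *
      ∫ x in J j, minSqDist (codebook nj k) x), zero_add, Finset.Ico_add_one_right_eq_Icc]
    exact Finset.sum_congr rfl fun j hj => pow_mul_integral_J_minSqDist_codebook_of_mem hpos hj
  rw [← hasSum_nat_add_iff' k, hhead, add_sub_cancel_left]
  exact (hasSum_tail_coeff.mul_right _).congr_fun (pow_mul_integral_J_minSqDist_codebook_of_lt hpos)

theorem stmt_9 (k : ℕ) (hk : 1 ≤ k) (nj : ℕ → ℕ) (hpos : ∀ j ∈ Finset.Icc 1 k, 0 < nj j)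
    (n : ℕ) (hn : n = (∑ j ∈ Finset.Icc 1 k, nj j) + 1) :
    (∫ x, sInf ((fun a => (x - a) ^ 2) ''
        ((⋃ j ∈ Finset.Icc 1 k,
            {y : ℝ | ∃ i ∈ Finset.Icc 1 (nj j),
              y = (1 - 1 / 3 ^ (j - 1)) + (2 * (i : ℝ) - 1) / (2 * nj j) * (1 / 3 ^ j)}) ∪
          {1 - 1 / (2 * 3 ^ k)})) ∂P) =
      (∑ j ∈ Finset.Icc 1 k, (1 / (nj j : ℝ) ^ 2) * (1 / 12) * (1 / 18 ^ j)) +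
        (25 / 204) * (1 / 18 ^ k) :=
  stmt_9_general k nj hpos
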